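/- arXiv:1311.1020 — 4 statements merged into one kernel-verified Lean document; each statement's English description precedes it below -/
import Mathlib

section
/- Let à be a d×d real non-singular matrix. Suppose à is diagonalizable over ℂ and all its eigenvalues have absolute value 1. Then there exist a real orthogonal d×d matrix U and a real symmetric positive definite d×d matrix Q such that à = Q U Q⁻¹. -/
/-!
Over `ℂ` write `A = P D P⁻¹` with `D` diagonal; its diagonal entries are eigenvalues, hence
unimodular, so `D` is unitary and the Hermitian form `H = (P⁻¹)ᴴ P⁻¹` is positive definite and
`A`-invariant. Because `A` is real, the real part `T` of `H` is a real positive definite form with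
`Aᵀ T A = T`. For `R = √T` the matrix `R A R⁻¹` is then orthogonal, and `Q = R⁻¹` does the job.
-/

open Matrix
open scoped ComplexOrder

namespace Matrix

variable {n : Type*} [Fintype n]

lemma isRoot_charpoly_conj_diagonal [DecidableEq n] {R : Type*} [CommRing R] {P : Matrix n n R}
    (hP : IsUnit P) (v : n → R) (i : n) : (P * diagonal v * P⁻¹).charpoly.IsRoot (v i) := by
  rw [← hP.unit_spec, charpoly_units_conj, charpoly_diagonal, Polynomial.IsRoot,
    Polynomial.eval_prod]
  exact Finset.prod_eq_zero (Finset.mem_univ i) (by simp)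

lemma exists_posDef_conjTranspose_mul_mul_eq_self [DecidableEq n] {K : Type*} [Field K]
    [PartialOrder K] [StarRing K] [StarOrderedRing K] {P : Matrix n n K} (hP : IsUnit P)
    {v : n → K} (hv : ∀ i, star (v i) * v i = 1) :
    ∃ H : Matrix n n K, H.PosDef ∧
      (P * diagonal v * P⁻¹)ᴴ * H * (P * diagonal v * P⁻¹) = H := by
  have hPinv : P⁻¹ * P = 1 := nonsing_inv_mul P ((isUnit_iff_isUnit_det P).mp hP)
  have hunitary : (diagonal v)ᴴ * diagonal v = 1 := by
    simp [diagonal_conjTranspose, diagonal_mul_diagonal, hv]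
  refine ⟨(P⁻¹)ᴴ * P⁻¹, PosDef.conjTranspose_mul_self _
    (mulVec_injective_of_isUnit (isUnit_nonsing_inv_iff.mpr hP)), ?_⟩
  calc (P * diagonal v * P⁻¹)ᴴ * ((P⁻¹)ᴴ * P⁻¹) * (P * diagonal v * P⁻¹)
      = (P⁻¹)ᴴ * (diagonal v)ᴴ * (P⁻¹ * P)ᴴ * (P⁻¹ * P) * diagonal v * P⁻¹ := by
        simp only [conjTranspose_mul]
        noncomm_ring
    _ = (P⁻¹)ᴴ * P⁻¹ := by
        rw [hPinv, conjTranspose_one, mul_one, mul_one, mul_assoc _ (diagonal v)ᴴ, hunitary,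
          mul_one]

lemma PosDef.map_re {𝕜 : Type*} [RCLike 𝕜] {H : Matrix n n 𝕜} (hH : H.PosDef) :
    (H.map RCLike.re).PosDef := by
  refine .of_dotProduct_mulVec_pos ?_ fun x hx => ?_
  · ext i j
    simpa using congrArg RCLike.re (hH.isHermitian.apply i j)
  · have hx' : (fun i => (x i : 𝕜)) ≠ 0 := fun h =>
      hx (funext fun i => by simpa using congrFun h i)
    simpa [dotProduct, mulVec, map_sum, Finset.mul_sum] using
      (RCLike.pos_iff.mp (hH.dotProduct_mulVec_pos hx')).1

lemma map_re_conjTranspose_mul_mul {𝕜 : Type*} [RCLike 𝕜] (A : Matrix n n ℝ)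
    (H : Matrix n n 𝕜) :
    ((A.map RCLike.ofReal)ᴴ * H * A.map RCLike.ofReal).map RCLike.re =
      Aᵀ * H.map RCLike.re * A := by
  ext i j
  simp [mul_apply, map_sum, Finset.sum_mul]

open scoped MatrixOrder in
lemma exists_orthogonal_conj_of_transpose_mul_mul_eq [DecidableEq n] {A T : Matrix n n ℝ}
    (hT : T.PosDef) (hAT : Aᵀ * T * A = T) :
    ∃ U Q : Matrix n n ℝ, Uᵀ * U = 1 ∧ Q.PosDef ∧ A = Q * U * Q⁻¹ := by
  set R := CFC.sqrt T
  have hRR : R * R = T := CFC.sqrt_mul_sqrt_self T hT.posSemidef.nonneg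
  have hR : R.PosDef := hT.isStrictlyPositive.sqrt.posDef
  have hRsymm : Rᵀ = R := by rw [← conjTranspose_eq_transpose_of_trivial, hR.isHermitian.eq]
  have hRdet : IsUnit R.det := (isUnit_iff_isUnit_det R).mp hR.isUnit
  refine ⟨R * A * R⁻¹, R⁻¹, ?_, hR.inv, ?_⟩
  · calc (R * A * R⁻¹)ᵀ * (R * A * R⁻¹) = R⁻¹ * (Aᵀ * (R * R) * A) * R⁻¹ := by
          rw [transpose_mul, transpose_mul, transpose_nonsing_inv, hRsymm]
          noncomm_ring
      _ = 1 := by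
          rw [hRR, hAT, ← hRR, ← mul_assoc, nonsing_inv_mul R hRdet, one_mul,
            mul_nonsing_inv R hRdet]
  · rw [nonsing_inv_nonsing_inv R hRdet, ← mul_assoc, ← mul_assoc, nonsing_inv_mul R hRdet,
      one_mul, mul_assoc, nonsing_inv_mul R hRdet, mul_one]

end Matrix

theorem elliptic_stmt0_general (d : ℕ) (A : Matrix (Fin d) (Fin d) ℝ)
    (hAdiag : ∃ Pm D : Matrix (Fin d) (Fin d) ℂ, IsUnit Pm ∧ D.IsDiag ∧
      A.map Complex.ofReal = Pm * D * Pm⁻¹)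
    (hAeig : ∀ z : ℂ, (Matrix.charpoly (A.map Complex.ofReal)).IsRoot z →
      ‖z‖ = 1) :
    ∃ U Q : Matrix (Fin d) (Fin d) ℝ,
      Uᵀ * U = 1 ∧ Qᵀ = Q ∧ (∀ x : Fin d → ℝ, x ≠ 0 → 0 < x ⬝ᵥ (Q *ᵥ x)) ∧
      A = Q * U * Q⁻¹ := by
  obtain ⟨P, D, hP, hD, hAPD⟩ := hAdiag
  rw [← hD.diagonal_diag] at hAPD
  have hunit : ∀ i, star (D.diag i) * D.diag i = 1 := fun i => by
    rw [RCLike.star_def, RCLike.conj_mul,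
      hAeig _ (hAPD ▸ isRoot_charpoly_conj_diagonal hP D.diag i)]
    norm_num
  obtain ⟨H, hH, hHinv⟩ := exists_posDef_conjTranspose_mul_mul_eq_self hP hunit
  have hT : Aᵀ * H.map RCLike.re * A = H.map RCLike.re := by
    rw [← map_re_conjTranspose_mul_mul]
    exact congrArg (map · RCLike.re) (hAPD ▸ hHinv)
  obtain ⟨U, Q, hU, hQ, rfl⟩ := exists_orthogonal_conj_of_transpose_mul_mul_eq hH.map_re hT
  refine ⟨U, Q, hU, ?_, fun x hx => by simpa using hQ.dotProduct_mulVec_pos hx, rfl⟩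
  rw [← conjTranspose_eq_transpose_of_trivial, hQ.isHermitian.eq]

/-- Any real non-singular matrix that is diagonalizable over ℂ with all
eigenvalues of absolute value 1 can be written as `Q * U * Q⁻¹` with `U` real orthogonal
and `Q` real symmetric positive definite. -/
theorem elliptic_stmt0 (d : ℕ) (A : Matrix (Fin d) (Fin d) ℝ)
    (hA : A.det ≠ 0)
    (hAdiag : ∃ Pm D : Matrix (Fin d) (Fin d) ℂ, IsUnit Pm ∧ D.IsDiag ∧
      A.map Complex.ofReal = Pm * D * Pm⁻¹)
    (hAeig : ∀ z : ℂ, (Matrix.charpoly (A.map Complex.ofReal)).IsRoot z →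
      ‖z‖ = 1) :
    ∃ U Q : Matrix (Fin d) (Fin d) ℝ,
      Uᵀ * U = 1 ∧ Qᵀ = Q ∧ (∀ x : Fin d → ℝ, x ≠ 0 → 0 < x ⬝ᵥ (Q *ᵥ x)) ∧
      A = Q * U * Q⁻¹ :=
  elliptic_stmt0_general d A hAdiag hAeig
end

section
/- Let A be a d×d dilation matrix with integer entries, i.e. all eigenvalues of A are greater than 1 in absolute value. Let S(A) := {s ∈ [0,1)^d : As ∈ ℤ^d}. Then ⋃_{j=1}^∞ ⋃_{s ∈ S(A)\{0}} A^j{k + s : k ∈ ℤ^d} = ℤ^d \ {0}, and the sets A^j{k + s : k ∈ ℤ^d} and A^{j'}{k + s' : k ∈ ℤ^d} are disjoint whenever j ≠ j' or s ≠ s' (j, j' ≥ 1, s, s' ∈ S(A)\{0}). -/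
/-!
The lattice `ℤ^d` is `A`-invariant, so for `j ≥ 1` and `A s ∈ ℤ^d` every point `A^j (k + s)` is
a lattice point, nonzero when `s ≠ 0`. Conversely, the spectrum of `A⁻¹` lies in the open unit
disc, so Gelfand's formula gives `A⁻ⁿ x → 0`; for a lattice point `x ≠ 0` there is therefore a
first `n` with `A⁻ⁿ x ∉ ℤ^d` (necessarily `n ≥ 1`), and splitting `A⁻ⁿ x` into integer and
fractional parts writes `x = A^n (k + s)` with `s ∈ S(A) \ {0}`. For disjointness, cancelling
`A^j` from `A^j (k + s) = A^j' (k' + s')` with `j ≤ j'` leaves `k + s = A^(j' - j) (k' + s')`,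
a lattice point when `j < j'` (forcing `s = 0`), while for `j = j'` the difference `s - s'` is
a lattice point in `(-1, 1)^d`.
-/

open Matrix Filter Topology

theorem tendsto_norm_pow_nhds_zero_of_spectrum_subset_ball {𝔸 : Type*} [NormedRing 𝔸]
    [NormedAlgebra ℂ 𝔸] [CompleteSpace 𝔸] {a : 𝔸} (ha : ∀ z ∈ spectrum ℂ a, ‖z‖ < 1) :
    Tendsto (fun n : ℕ => ‖a ^ n‖) atTop (𝓝 0) := by
  have hρ : spectralRadius ℂ a < 1 := by
    rcases (spectrum ℂ a).eq_empty_or_nonempty with h | h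
    · simp [spectralRadius, h]
    · exact_mod_cast spectrum.spectralRadius_lt_of_forall_lt_of_nonempty h
        fun z hz => (by exact_mod_cast ha z hz : ‖z‖₊ < 1)
  obtain ⟨c, hρc, hc1⟩ := ENNReal.lt_iff_exists_nnreal_btwn.mp hρ
  have hbound : ∀ᶠ n : ℕ in atTop, ‖a ^ n‖ ≤ c ^ n := by
    filter_upwards [spectrum.pow_nnnorm_pow_one_div_tendsto_nhds_spectralRadius a
      |>.eventually_lt_const hρc, eventually_gt_atTop 0] with n hn hn0
    rw [one_div, ENNReal.rpow_inv_lt_iff (by exact_mod_cast hn0), ENNReal.rpow_natCast] at hn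
    exact_mod_cast hn.le
  exact squeeze_zero' (.of_forall fun _ => norm_nonneg _) hbound
    (tendsto_pow_atTop_nhds_zero_of_lt_one c.coe_nonneg (by exact_mod_cast hc1))

def integerLattice (ι : Type*) : AddSubgroup (ι → ℝ) :=
  ((Int.castAddHom ℝ).compLeft ι).range

section IntegerLattice

variable {ι : Type*}

theorem mem_integerLattice {v : ι → ℝ} :
    v ∈ integerLattice ι ↔ ∃ k : ι → ℤ, v = fun i => (k i : ℝ) :=
  AddMonoidHom.mem_range.trans (exists_congr fun _ => eq_comm)

theorem intCast_mem_integerLattice (k : ι → ℤ) : (fun i => (k i : ℝ)) ∈ integerLattice ι :=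
  mem_integerLattice.mpr ⟨k, rfl⟩

theorem mulVec_mem_integerLattice {κ : Type*} [Fintype ι] {A : Matrix κ ι ℝ}
    (hA : ∀ i j, ∃ z : ℤ, A i j = z) {v : ι → ℝ} (hv : v ∈ integerLattice ι) :
    A *ᵥ v ∈ integerLattice κ := by
  obtain ⟨k, rfl⟩ := mem_integerLattice.mp hv
  choose Z hZ using hA
  refine mem_integerLattice.mpr ⟨fun i => ∑ j, Z i j * k j, funext fun i => ?_⟩
  simp [mulVec, dotProduct, hZ]

theorem eq_of_sub_mem_integerLattice {s s' : ι → ℝ} (hs : ∀ i, s i ∈ Set.Ico (0 : ℝ) 1)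
    (hs' : ∀ i, s' i ∈ Set.Ico (0 : ℝ) 1) (h : s - s' ∈ integerLattice ι) : s = s' := by
  obtain ⟨k, hk⟩ := mem_integerLattice.mp h
  funext i
  have hki : s i - s' i = k i := congrFun hk i
  have hk1 : |k i| < 1 := by
    have : |(k i : ℝ)| < 1 :=
      abs_lt.mpr ⟨by linarith [(hs i).1, (hs' i).2], by linarith [(hs i).2, (hs' i).1]⟩
    exact_mod_cast this
  rw [Int.abs_lt_one_iff.mp hk1, Int.cast_zero] at hki
  linarith

theorem eq_zero_of_mem_integerLattice {s : ι → ℝ} (hs : ∀ i, s i ∈ Set.Ico (0 : ℝ) 1)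
    (h : s ∈ integerLattice ι) : s = 0 :=
  eq_of_sub_mem_integerLattice hs (fun _ => ⟨le_rfl, zero_lt_one⟩) (by simpa using h)

theorem eq_zero_of_mem_integerLattice_of_norm_lt_one [Fintype ι] {v : ι → ℝ}
    (hv : v ∈ integerLattice ι) (h : ‖v‖ < 1) : v = 0 := by
  obtain ⟨k, rfl⟩ := mem_integerLattice.mp hv
  funext i
  have : |(k i : ℝ)| < 1 := (norm_le_pi_norm _ i).trans_lt h
  have : |k i| < 1 := by exact_mod_cast this
  simp [Int.abs_lt_one_iff.mp this]

theorem exists_mem_integerLattice_add (u : ι → ℝ) :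
    ∃ k ∈ integerLattice ι, ∃ s : ι → ℝ, (∀ i, s i ∈ Set.Ico (0 : ℝ) 1) ∧ u = k + s :=
  ⟨_, intCast_mem_integerLattice fun i => ⌊u i⌋, fun i => Int.fract (u i),
    fun _ => ⟨Int.fract_nonneg _, Int.fract_lt_one _⟩,
    funext fun i => (Int.floor_add_fract (u i)).symm⟩

end IntegerLattice

namespace Matrix

variable {ι : Type*} [Fintype ι] [DecidableEq ι] {A : Matrix ι ι ℝ}

theorem isUnit_det_of_charpoly_roots_one_lt_norm
    (hA : ∀ z : ℂ, (A.map Complex.ofReal).charpoly.IsRoot z → 1 < ‖z‖) : IsUnit A.det := by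
  have h0 : (0 : ℂ) ∉ spectrum ℂ (A.map Complex.ofReal) := fun h => by
    have := hA 0 (mem_spectrum_iff_isRoot_charpoly.mp h)
    norm_num at this
  rw [spectrum.zero_notMem_iff, isUnit_iff_isUnit_det] at h0
  have : (A.map Complex.ofReal).det = A.det := (Complex.ofRealHom.map_det A).symm
  rw [this, isUnit_iff_ne_zero, Complex.ofReal_ne_zero] at h0
  exact h0.isUnit

attribute [local instance] Matrix.linftyOpNormedRing Matrix.linftyOpNormedAlgebra

theorem linfty_opNorm_map_ofReal (M : Matrix ι ι ℝ) : ‖M.map Complex.ofReal‖ = ‖M‖ := by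
  simp [linfty_opNorm_def]

theorem tendsto_inv_pow_mulVec_nhds_zero
    (hA : ∀ z : ℂ, (A.map Complex.ofReal).charpoly.IsRoot z → 1 < ‖z‖) (v : ι → ℝ) :
    Tendsto (fun n : ℕ => A⁻¹ ^ n *ᵥ v) atTop (𝓝 0) := by
  let u := Units.map Complex.ofRealHom.mapMatrix.toMonoidHom
    (nonsingInvUnit A (isUnit_det_of_charpoly_roots_one_lt_norm hA))
  have hspec : ∀ z ∈ spectrum ℂ (A⁻¹.map Complex.ofReal), ‖z‖ < 1 := by
    intro z hz
    rw [show A⁻¹.map Complex.ofReal = ↑u⁻¹ from rfl, ← spectrum.map_inv, Set.mem_inv] at hz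
    have := hA _ (mem_spectrum_iff_isRoot_charpoly.mp hz)
    rw [norm_inv, one_lt_inv_iff₀] at this
    exact this.2
  have : CompleteSpace (Matrix ι ι ℂ) := FiniteDimensional.complete ℂ _
  have hnorm : ∀ n : ℕ, ‖A⁻¹ ^ n *ᵥ v‖ ≤ ‖(A⁻¹.map Complex.ofReal) ^ n‖ * ‖v‖ := fun n => by
    have hpow : (A⁻¹ ^ n).map Complex.ofReal = A⁻¹.map Complex.ofReal ^ n :=
      map_pow Complex.ofRealHom.mapMatrix A⁻¹ n
    rw [← hpow, linfty_opNorm_map_ofReal]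
    exact linfty_opNorm_mulVec _ _
  rw [tendsto_zero_iff_norm_tendsto_zero]
  exact squeeze_zero (fun _ => norm_nonneg _) hnorm
    (by simpa using (tendsto_norm_pow_nhds_zero_of_spectrum_subset_ball hspec).mul_const ‖v‖)

end Matrix

section DilatedCoset

variable {ι : Type*} [Fintype ι] {A : Matrix ι ι ℝ}

-- `digitSet A` is `S(A)`, and `dilatedCoset A j s` is `A^j (ℤ^d + s)`.
variable (A) in
def digitSet : Set (ι → ℝ) :=
  {s | (∀ i, s i ∈ Set.Ico (0 : ℝ) 1) ∧ A *ᵥ s ∈ integerLattice ι}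

variable [DecidableEq ι]

variable (A) in
def dilatedCoset (j : ℕ) (s : ι → ℝ) : Set (ι → ℝ) :=
  {v | ∃ k ∈ integerLattice ι, v = A ^ j *ᵥ (k + s)}

theorem pow_mulVec_mem_integerLattice (hAL : ∀ v ∈ integerLattice ι, A *ᵥ v ∈ integerLattice ι)
    (n : ℕ) {v : ι → ℝ} (hv : v ∈ integerLattice ι) : A ^ n *ᵥ v ∈ integerLattice ι := by
  induction n generalizing v with
  | zero => simpa using hv
  | succ n ih =>
    rw [pow_succ, ← mulVec_mulVec]
    exact ih (hAL v hv)

theorem pow_mulVec_injective (hA : IsUnit A.det) (n : ℕ) :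
    Function.Injective (A ^ n *ᵥ ·) :=
  mulVec_injective_iff_isUnit.mpr (((isUnit_iff_isUnit_det A).mpr hA).pow n)

theorem pow_mulVec_inv_pow_mulVec (hA : IsUnit A.det) (n : ℕ) (v : ι → ℝ) :
    A ^ n *ᵥ (A⁻¹ ^ n *ᵥ v) = v := by
  rw [mulVec_mulVec, inv_pow', mul_nonsing_inv _ (by simpa [det_pow] using hA.pow n),
    one_mulVec]

theorem dilatedCoset_subset_integerLattice
    (hAL : ∀ v ∈ integerLattice ι, A *ᵥ v ∈ integerLattice ι) {j : ℕ} (hj : 1 ≤ j)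
    {s : ι → ℝ} (hs : s ∈ digitSet A) : dilatedCoset A j s ⊆ integerLattice ι := by
  rintro _ ⟨k, hk, rfl⟩
  obtain ⟨n, rfl⟩ := Nat.exists_eq_add_of_le' hj
  rw [pow_succ, ← mulVec_mulVec, mulVec_add]
  exact pow_mulVec_mem_integerLattice hAL n (add_mem (hAL k hk) hs.2)

theorem zero_notMem_dilatedCoset (hA : IsUnit A.det) (j : ℕ) {s : ι → ℝ}
    (hs : s ∈ digitSet A \ {0}) : 0 ∉ dilatedCoset A j s := by
  rintro ⟨k, hk, h⟩
  have hks : k + s = 0 := pow_mulVec_injective hA j (h.symm.trans (mulVec_zero _).symm)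
  refine hs.2 (eq_zero_of_mem_integerLattice hs.1.1 ?_)
  rw [eq_neg_of_add_eq_zero_right hks]
  exact neg_mem hk

theorem exists_inv_pow_mulVec_notMem_integerLattice (hA : IsUnit A.det)
    (hdecay : ∀ v, Tendsto (fun n : ℕ => A⁻¹ ^ n *ᵥ v) atTop (𝓝 0)) {x : ι → ℝ} (hx0 : x ≠ 0) :
    ∃ n, A⁻¹ ^ n *ᵥ x ∉ integerLattice ι := by
  obtain ⟨n, hn⟩ := ((hdecay x).eventually (Metric.ball_mem_nhds 0 one_pos)).exists
  refine ⟨n, fun hmem => hx0 ?_⟩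
  rw [← pow_mulVec_inv_pow_mulVec hA n x,
    eq_zero_of_mem_integerLattice_of_norm_lt_one hmem (by simpa using hn), mulVec_zero]

theorem exists_mem_dilatedCoset (hAL : ∀ v ∈ integerLattice ι, A *ᵥ v ∈ integerLattice ι)
    (hA : IsUnit A.det) (hdecay : ∀ v, Tendsto (fun n : ℕ => A⁻¹ ^ n *ᵥ v) atTop (𝓝 0))
    {x : ι → ℝ} (hx : x ∈ integerLattice ι) (hx0 : x ≠ 0) :
    ∃ j, 1 ≤ j ∧ ∃ s ∈ digitSet A \ {0}, x ∈ dilatedCoset A j s := by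
  classical
  have hex := exists_inv_pow_mulVec_notMem_integerLattice hA hdecay hx0
  obtain ⟨j, hj⟩ : ∃ j, Nat.find hex = j + 1 := Nat.exists_eq_succ_of_ne_zero fun h =>
    Nat.find_spec hex (by rw [h, pow_zero, one_mulVec]; exact hx)
  have hw : A⁻¹ ^ j *ᵥ x ∈ integerLattice ι := not_not.mp (Nat.find_min hex (by omega))
  have hu : A⁻¹ ^ (j + 1) *ᵥ x ∉ integerLattice ι := hj ▸ Nat.find_spec hex
  have hAu : A *ᵥ (A⁻¹ ^ (j + 1) *ᵥ x) = A⁻¹ ^ j *ᵥ x := by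
    rw [mulVec_mulVec, pow_succ', ← mul_assoc, mul_nonsing_inv _ hA, one_mul]
  obtain ⟨k, hk, s, hs, hsplit⟩ := exists_mem_integerLattice_add (A⁻¹ ^ (j + 1) *ᵥ x)
  refine ⟨j + 1, by omega, s, ⟨⟨hs, ?_⟩, ?_⟩, k, hk, ?_⟩
  · have : A *ᵥ s = A⁻¹ ^ j *ᵥ x - A *ᵥ k := by
      rw [← hAu, hsplit, mulVec_add, add_sub_cancel_left]
    rw [this]
    exact sub_mem hw (hAL k hk)
  · rintro rfl
    exact hu (by rw [hsplit, add_zero]; exact hk)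
  · rw [← hsplit, pow_mulVec_inv_pow_mulVec hA]

theorem iUnion_dilatedCoset (hAL : ∀ v ∈ integerLattice ι, A *ᵥ v ∈ integerLattice ι)
    (hA : IsUnit A.det) (hdecay : ∀ v, Tendsto (fun n : ℕ => A⁻¹ ^ n *ᵥ v) atTop (𝓝 0)) :
    ⋃ j ∈ {j : ℕ | 1 ≤ j}, ⋃ s ∈ digitSet A \ {0}, dilatedCoset A j s =
      (integerLattice ι : Set (ι → ℝ)) \ {0} := by
  ext x
  simp only [Set.mem_iUnion, Set.mem_ofPred_eq, exists_prop, Set.mem_sdiff, SetLike.mem_coe,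
    Set.mem_singleton_iff]
  constructor
  · rintro ⟨j, hj, s, hs, hx⟩
    exact ⟨dilatedCoset_subset_integerLattice hAL hj hs.1 hx,
      fun h => zero_notMem_dilatedCoset hA j hs (h ▸ hx)⟩
  · rintro ⟨hx, hx0⟩
    exact exists_mem_dilatedCoset hAL hA hdecay hx hx0

theorem eq_of_mem_dilatedCoset_of_le (hAL : ∀ v ∈ integerLattice ι, A *ᵥ v ∈ integerLattice ι)
    (hA : IsUnit A.det) {j j' : ℕ} (hjj' : j ≤ j') {s s' : ι → ℝ} (hs : s ∈ digitSet A \ {0})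
    (hs' : s' ∈ digitSet A) {x : ι → ℝ} (hx : x ∈ dilatedCoset A j s)
    (hx' : x ∈ dilatedCoset A j' s') : j = j' ∧ s = s' := by
  obtain ⟨k, hk, rfl⟩ := hx
  obtain ⟨k', hk', h⟩ := hx'
  obtain ⟨t, rfl⟩ := Nat.exists_eq_add_of_le hjj'
  rw [pow_add, ← mulVec_mulVec] at h
  replace h := pow_mulVec_injective hA j h
  cases t with
  | zero =>
    rw [pow_zero, one_mulVec] at h
    refine ⟨rfl, eq_of_sub_mem_integerLattice hs.1.1 hs'.1 ?_⟩
    have : s - s' = k' - k := by rw [sub_eq_sub_iff_add_eq_add, add_comm, h]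
    rw [this]
    exact sub_mem hk' hk
  | succ t =>
    have hks : k + s ∈ integerLattice ι :=
      h ▸ dilatedCoset_subset_integerLattice hAL (Nat.succ_pos t) hs' ⟨k', hk', rfl⟩
    exact absurd (eq_zero_of_mem_integerLattice hs.1.1 (by simpa using sub_mem hks hk)) hs.2

theorem disjoint_dilatedCoset (hAL : ∀ v ∈ integerLattice ι, A *ᵥ v ∈ integerLattice ι)
    (hA : IsUnit A.det) {j j' : ℕ} {s s' : ι → ℝ} (hs : s ∈ digitSet A \ {0})
    (hs' : s' ∈ digitSet A \ {0}) (hne : j ≠ j' ∨ s ≠ s') :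
    Disjoint (dilatedCoset A j s) (dilatedCoset A j' s') := by
  refine Set.disjoint_left.mpr fun x hx hx' => ?_
  have : j = j' ∧ s = s' := by
    rcases le_total j j' with h | h
    · exact eq_of_mem_dilatedCoset_of_le hAL hA h hs hs'.1 hx hx'
    · exact (eq_of_mem_dilatedCoset_of_le hAL hA h hs' hs.1 hx' hx).imp Eq.symm Eq.symm
  tauto

end DilatedCoset

/-- For an integer dilation matrix `A` (all complex eigenvalues of absolute
value `> 1`) and `S(A) = {s ∈ [0,1)^d : A s ∈ ℤ^d}`, the sets `A^j {k + s : k ∈ ℤ^d}`,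
`j ≥ 1`, `s ∈ S(A) \ {0}`, form a partition of `ℤ^d \ {0}` (viewed inside `ℝ^d`). -/
theorem elliptic_stmt5 (d : ℕ) (A : Matrix (Fin d) (Fin d) ℝ)
    (hAint : ∀ i j, ∃ z : ℤ, A i j = (z : ℝ))
    (hAeig : ∀ z : ℂ, (Matrix.charpoly (A.map Complex.ofReal)).IsRoot z →
      1 < ‖z‖)
    (SA : Set (Fin d → ℝ))
    (hSA : SA = {s | (∀ i, s i ∈ Set.Ico (0:ℝ) 1) ∧
      ∃ k : Fin d → ℤ, A *ᵥ s = fun i => (k i : ℝ)})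
    (T : ℕ → (Fin d → ℝ) → Set (Fin d → ℝ))
    (hT : ∀ j s, T j s =
      {v | ∃ k : Fin d → ℤ, v = (A ^ j) *ᵥ ((fun i => (k i : ℝ)) + s)}) :
    (⋃ j ∈ {j : ℕ | 1 ≤ j}, ⋃ s ∈ SA \ {0}, T j s)
        = {v : Fin d → ℝ | ∃ k : Fin d → ℤ, v = fun i => (k i : ℝ)} \ {0} ∧
    ∀ j, 1 ≤ j → ∀ j', 1 ≤ j' → ∀ s ∈ SA \ {0}, ∀ s' ∈ SA \ {0},
      (j ≠ j' ∨ s ≠ s') → Disjoint (T j s) (T j' s') := by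
  have hdigit : SA = digitSet A := by
    rw [hSA]
    ext s
    simp only [digitSet, mem_integerLattice, Set.mem_ofPred_eq]
  have hcoset : T = dilatedCoset A := by
    funext j s
    rw [hT]
    ext v
    simp [dilatedCoset, mem_integerLattice]
  have hlattice : {v : Fin d → ℝ | ∃ k : Fin d → ℤ, v = fun i => (k i : ℝ)} =
      integerLattice (Fin d) :=
    Set.ext fun _ => mem_integerLattice.symm
  have hAL : ∀ v ∈ integerLattice (Fin d), A *ᵥ v ∈ integerLattice (Fin d) :=
    fun _ => mulVec_mem_integerLattice hAint
  have hdet := isUnit_det_of_charpoly_roots_one_lt_norm hAeig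
  subst hdigit hcoset
  rw [hlattice]
  exact ⟨iUnion_dilatedCoset hAL hdet (tendsto_inv_pow_mulVec_nhds_zero hAeig),
    fun _ _ _ _ _ hs _ hs' => disjoint_dilatedCoset hAL hdet hs hs'⟩
end

section
/- Let Q² = (q_{ij}) be a real symmetric positive definite d×d matrix, so that P(ξ) := ξᵀQ²ξ is a positive definite quadratic form, and define G(ξ₁,…,ξ_d) := 4 ∑_{i=1}^d q_{ii} sin²(ξ_i/2) + 2 ∑_{1≤i<j≤d} q_{ij} sin ξ_i sin ξ_j. Then G(ξ) ≥ 0 for all ξ ∈ ℝ^d, and G(ξ) = 0 if and only if ξ ∈ 2πℤ^d. -/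
open Matrix Real

/-!
Since `4 sin²(x/2) = sin² x + 4 sin⁴(x/2)` and `Q²` is symmetric,
`G(ξ) = sᵀ Q² s + 4 ∑ᵢ qᵢᵢ sin⁴(ξᵢ/2)` with `s = (sin ξ₁, …, sin ξ_d)`. Both terms are
nonnegative because `Q²` is positive definite, and the second one, whose weights `qᵢᵢ` are
positive, vanishes exactly when every `sin(ξᵢ/2)` does, which already forces `s = 0`.
-/

theorem Finset.sum_sum_eq_sum_diag_add_two_mul_sum_lt {ι R : Type*} [Fintype ι] [LinearOrder ι]
    [NonAssocSemiring R] (F : ι → ι → R) (hF : ∀ i j, F i j = F j i) :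
    ∑ i, ∑ j, F i j = ∑ i, F i i + 2 * ∑ i, ∑ j, if i < j then F i j else 0 := by
  have hsplit : ∀ i j, F i j = (if i = j then F i j else 0) + (if i < j then F i j else 0)
      + (if j < i then F i j else 0) := by
    intro i j
    rcases lt_trichotomy i j with h | rfl | h
    · simp [h, h.ne, h.not_gt]
    · simp
    · simp [h, h.ne', h.not_gt]
  have hswap : (∑ i, ∑ j, if j < i then F i j else 0) = ∑ i, ∑ j, if i < j then F i j else 0 := by
    rw [Finset.sum_comm]
    simp_rw [hF]
  calc ∑ i, ∑ j, F i j
      = ∑ i, ∑ j, ((if i = j then F i j else 0) + (if i < j then F i j else 0)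
          + (if j < i then F i j else 0)) :=
        Finset.sum_congr rfl fun i _ => Finset.sum_congr rfl fun j _ => hsplit i j
    _ = ∑ i, F i i + 2 * ∑ i, ∑ j, if i < j then F i j else 0 := by
        simp only [Finset.sum_add_distrib, hswap, Finset.sum_ite_eq, Finset.mem_univ, if_true]
        rw [two_mul, add_assoc]

theorem Matrix.IsSymm.dotProduct_mulVec_self_eq {ι R : Type*} [Fintype ι] [LinearOrder ι]
    [CommSemiring R] {Q : Matrix ι ι R} (hQ : Q.IsSymm) (x : ι → R) :
    x ⬝ᵥ (Q *ᵥ x) = ∑ i, Q i i * x i ^ 2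
      + 2 * ∑ i, ∑ j, if i < j then Q i j * x i * x j else 0 := by
  have hdot : x ⬝ᵥ (Q *ᵥ x) = ∑ i, ∑ j, Q i j * x i * x j := by
    simp only [dotProduct, mulVec, Finset.mul_sum]
    exact Finset.sum_congr rfl fun i _ => Finset.sum_congr rfl fun j _ => by ring
  rw [hdot, Finset.sum_sum_eq_sum_diag_add_two_mul_sum_lt _ fun i j => by
    rw [hQ.apply i j]; ring]
  simp only [sq, mul_assoc]

theorem Real.four_mul_sin_half_sq (x : ℝ) :
    4 * sin (x / 2) ^ 2 = sin x ^ 2 + 4 * sin (x / 2) ^ 4 := by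
  have hdouble : sin x = 2 * sin (x / 2) * cos (x / 2) := by
    rw [← sin_two_mul, mul_div_cancel₀ x two_ne_zero]
  rw [hdouble]
  linear_combination (-4 * sin (x / 2) ^ 2) * sin_sq_add_cos_sq (x / 2)

theorem Real.sin_half_eq_zero_iff {x : ℝ} : sin (x / 2) = 0 ↔ ∃ k : ℤ, x = 2 * π * k := by
  rw [sin_eq_zero_iff]
  refine exists_congr fun k => ?_
  constructor <;> intro h <;> linarith

namespace Matrix.PosDef

variable {n : Type*} {Q : Matrix n n ℝ}

theorem isSymm (hQ : Q.PosDef) : Q.IsSymm := by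
  simpa [IsHermitian, IsSymm] using hQ.1

variable [Fintype n]

theorem dotProduct_mulVec_self_nonneg (hQ : Q.PosDef) (x : n → ℝ) : 0 ≤ x ⬝ᵥ (Q *ᵥ x) := by
  simpa using hQ.posSemidef.dotProduct_mulVec_nonneg x

theorem sum_diag_mul_pow_four_nonneg (hQ : Q.PosDef) (y : n → ℝ) :
    0 ≤ ∑ i, Q i i * y i ^ 4 :=
  Finset.sum_nonneg fun _ _ => mul_nonneg hQ.diag_pos.le (by positivity)

theorem sum_diag_mul_pow_four_eq_zero_iff (hQ : Q.PosDef) (y : n → ℝ) :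
    ∑ i, Q i i * y i ^ 4 = 0 ↔ y = 0 := by
  rw [Finset.sum_eq_zero_iff_of_nonneg fun _ _ => mul_nonneg hQ.diag_pos.le (by positivity),
    funext_iff]
  simp [hQ.diag_pos.ne']

end Matrix.PosDef

noncomputable def discreteSymbol {ι : Type*} [Fintype ι] [LinearOrder ι]
    (Q : Matrix ι ι ℝ) (ξ : ι → ℝ) : ℝ :=
  4 * (∑ i, Q i i * sin (ξ i / 2) ^ 2)
    + 2 * (∑ i, ∑ j, if i < j then Q i j * sin (ξ i) * sin (ξ j) else 0)

section discreteSymbol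

variable {ι : Type*} [Fintype ι] [LinearOrder ι] {Q : Matrix ι ι ℝ}

theorem discreteSymbol_eq (hQ : Q.IsSymm) (ξ : ι → ℝ) :
    discreteSymbol Q ξ = (sin ∘ ξ) ⬝ᵥ (Q *ᵥ (sin ∘ ξ)) + 4 * ∑ i, Q i i * sin (ξ i / 2) ^ 4 := by
  have hdiag : 4 * ∑ i, Q i i * sin (ξ i / 2) ^ 2
      = ∑ i, Q i i * sin (ξ i) ^ 2 + 4 * ∑ i, Q i i * sin (ξ i / 2) ^ 4 := by
    simp only [Finset.mul_sum, ← Finset.sum_add_distrib]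
    exact Finset.sum_congr rfl fun i _ => by linear_combination Q i i * four_mul_sin_half_sq (ξ i)
  rw [hQ.dotProduct_mulVec_self_eq, discreteSymbol, hdiag]
  simp only [Function.comp_apply]
  ring

theorem discreteSymbol_nonneg (hQ : Q.PosDef) (ξ : ι → ℝ) : 0 ≤ discreteSymbol Q ξ := by
  rw [discreteSymbol_eq hQ.isSymm]
  have hquad := hQ.dotProduct_mulVec_self_nonneg (sin ∘ ξ)
  have := hQ.sum_diag_mul_pow_four_nonneg fun i => sin (ξ i / 2)
  positivity

theorem discreteSymbol_eq_zero_iff (hQ : Q.PosDef) {ξ : ι → ℝ} :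
    discreteSymbol Q ξ = 0 ↔ ∀ i, sin (ξ i / 2) = 0 := by
  have hquad := hQ.dotProduct_mulVec_self_nonneg (sin ∘ ξ)
  have hquartic := hQ.sum_diag_mul_pow_four_nonneg fun i => sin (ξ i / 2)
  rw [discreteSymbol_eq hQ.isSymm, add_eq_zero_iff_of_nonneg hquad (by positivity),
    mul_eq_zero, or_iff_right four_ne_zero, hQ.sum_diag_mul_pow_four_eq_zero_iff, funext_iff]
  refine ⟨fun h => h.2, fun h => ⟨?_, h⟩⟩
  have hsin : sin ∘ ξ = 0 := funext fun i => by
    have := four_mul_sin_half_sq (ξ i)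
    rw [h i] at this
    exact pow_eq_zero_iff two_ne_zero |>.1 (by simpa using this.symm)
  simp [hsin]

end discreteSymbol

/-- If `Q2 = (q_{ij})` is real symmetric positive definite and
`G(ξ) = 4 ∑_i q_{ii} sin²(ξ_i/2) + 2 ∑_{i<j} q_{ij} sin ξ_i sin ξ_j`, then `G ≥ 0`
on `ℝ^d` and `G(ξ) = 0` iff `ξ ∈ 2πℤ^d`. -/
theorem elliptic_stmt7 (d : ℕ) (Q2 : Matrix (Fin d) (Fin d) ℝ)
    (hQ2sym : Q2ᵀ = Q2)
    (hQ2pos : ∀ x : Fin d → ℝ, x ≠ 0 → 0 < x ⬝ᵥ (Q2 *ᵥ x))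
    (G : (Fin d → ℝ) → ℝ)
    (hG : ∀ ξ, G ξ = 4 * (∑ i, Q2 i i * Real.sin (ξ i / 2) ^ 2)
      + 2 * (∑ i, ∑ j, if i < j then Q2 i j * Real.sin (ξ i) * Real.sin (ξ j) else 0)) :
    (∀ ξ : Fin d → ℝ, 0 ≤ G ξ) ∧
    (∀ ξ : Fin d → ℝ, G ξ = 0 ↔ ∃ k : Fin d → ℤ, ξ = fun i => 2 * Real.pi * (k i : ℝ)) := by
  have hQ : Q2.PosDef := .of_dotProduct_mulVec_pos (by simpa [IsHermitian] using hQ2sym)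
    fun x hx => by simpa using hQ2pos x hx
  obtain rfl : G = discreteSymbol Q2 := funext hG
  refine ⟨discreteSymbol_nonneg hQ, fun ξ => ?_⟩
  simp only [discreteSymbol_eq_zero_iff hQ, sin_half_eq_zero_iff, funext_iff]
  exact Classical.skolem
end

section
/- In the elliptic setup, the function μ satisfies: (i) μ is 2π-periodic, i.e. μ(ξ + 2πk) = μ(ξ) for all ξ ∈ ℝ^d and k ∈ ℤ^d; (ii) μ(2πk) = 1 for all k ∈ ℤ^d; (iii) μ is continuous on all of ℝ^d; and (iv) there exist constants 𝒜 > 0 and 1 ≤ ℬ < ∞ such that 𝒜 ≤ μ(ξ) ≤ ℬ for all ξ ∈ ℝ^d. -/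
/-!
The symbol `G` is a trigonometric perturbation of the positive definite form `P ξ = ξᵀQ²ξ`:
it is `2π`-periodic, vanishes exactly on `2πℤ^d`, and `G = P + O(‖ξ‖⁴)`. The factorisation
`A⁻ᵀ = q^{-1/d} Q⁻¹UQ` with `U` orthogonal gives `q^{2/d} P(A⁻ᵀξ) = P ξ`, so near `0`
`μ ξ = m₀(A⁻ᵀξ) · (G/P)(A⁻ᵀξ) / (G/P)(ξ) → 1`; away from `2πℤ^d` the denominator of `μ` does
not vanish. The product `m₀ G = ∏_{s ∈ S(Aᵀ)} G(· + 2πs) / const` is invariant under translation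
by `2πA⁻ᵀℤ^d`, which permutes `S(Aᵀ)` modulo `ℤ^d`; this is the periodicity of `μ`. Finally a
continuous, positive, periodic function has compact range, which gives the bounds.
-/

open Matrix Real Filter Topology Module Submodule

namespace EllipticSymbol

variable {d : ℕ}

section Trigonometry

theorem abs_sin_sub_self_le (x : ℝ) : |sin x - x| ≤ |x| ^ 3 / 6 := by
  rcases le_total 0 x with hx | hx
  · rw [abs_of_nonpos (sub_nonpos.2 (sin_le hx)), abs_of_nonneg hx]
    linarith [sin_ge_sub_cube hx]
  · have h := sin_ge_sub_cube (neg_nonneg.2 hx)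
    rw [sin_neg] at h
    rw [abs_of_nonneg (sub_nonneg.2 (le_sin hx)), abs_of_nonpos hx]
    nlinarith

theorem sin_sq_add_int_mul_pi (x : ℝ) (n : ℤ) : sin (x + n * π) ^ 2 = sin x ^ 2 := by
  rw [sin_add_int_mul_pi, mul_pow, ← zpow_natCast, ← _root_.zpow_mul,
    Even.neg_one_zpow ⟨n, by push_cast; ring⟩, one_mul]

theorem four_mul_sin_half_sq (x : ℝ) : 4 * sin (x / 2) ^ 2 = sin x ^ 2 + 4 * sin (x / 2) ^ 4 := by
  have h : sin x = 2 * sin (x / 2) * cos (x / 2) := by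
    rw [← sin_two_mul, mul_div_cancel₀ x two_ne_zero]
  rw [h]
  linear_combination (-4 * sin (x / 2) ^ 2) * sin_sq_add_cos_sq (x / 2)

end Trigonometry

section Quadratic

variable {n : Type*} [Fintype n]

theorem sum_sum_eq_sum_add_two_mul_sum_lt [LinearOrder n] {R : Type*} [CommSemiring R]
    {a : n → n → R} (ha : ∀ i j, a i j = a j i) :
    ∑ i, ∑ j, a i j = ∑ i, a i i + 2 * ∑ i, ∑ j, if i < j then a i j else 0 := by
  have hsplit : ∀ i j, a i j = (if i < j then a i j else 0) + (if j < i then a j i else 0)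
      + (if i = j then a i j else 0) := by
    intro i j
    rcases lt_trichotomy i j with h | rfl | h
    · simp [h, h.not_gt, h.ne]
    · simp
    · simp [h, h.not_gt, h.ne', ha i j]
  simp_rw [Finset.sum_congr rfl fun i _ => Finset.sum_congr rfl fun j _ => hsplit i j,
    Finset.sum_add_distrib, Finset.sum_ite_eq, Finset.mem_univ, if_true]
  rw [Finset.sum_comm (f := fun i j => if j < i then a j i else 0)]
  ring

theorem abs_dotProduct_mulVec_le (M : Matrix n n ℝ) (u v : n → ℝ) :
    |u ⬝ᵥ (M *ᵥ v)| ≤ (∑ i, ∑ j, |M i j|) * (‖u‖ * ‖v‖) := by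
  simp only [dotProduct, mulVec, Finset.mul_sum, Finset.sum_mul]
  refine (Finset.abs_sum_le_sum_abs _ _).trans (Finset.sum_le_sum fun i _ =>
    (Finset.abs_sum_le_sum_abs _ _).trans (Finset.sum_le_sum fun j _ => ?_))
  rw [abs_mul, abs_mul, mul_left_comm]
  have hu := norm_le_pi_norm u i
  have hv := norm_le_pi_norm v j
  rw [Real.norm_eq_abs] at hu hv
  gcongr

variable {M : Matrix n n ℝ}

theorem dotProduct_mulVec_comm (hM : M.IsSymm) (u v : n → ℝ) :
    u ⬝ᵥ (M *ᵥ v) = v ⬝ᵥ (M *ᵥ u) := by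
  conv_lhs => rw [← hM.eq]
  rw [mulVec_transpose, dotProduct_comm, dotProduct_mulVec]

theorem dotProduct_mulVec_self_eq [LinearOrder n] (hM : M.IsSymm) (v : n → ℝ) :
    v ⬝ᵥ (M *ᵥ v)
      = ∑ i, M i i * v i ^ 2 + 2 * ∑ i, ∑ j, if i < j then M i j * v i * v j else 0 := by
  have h := sum_sum_eq_sum_add_two_mul_sum_lt (a := fun i j => M i j * v i * v j)
    fun i j => by rw [hM.apply i j]; ring
  have hv : v ⬝ᵥ (M *ᵥ v) = ∑ i, ∑ j, M i j * v i * v j := by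
    simp only [dotProduct, mulVec, Finset.mul_sum]
    exact Finset.sum_congr rfl fun i _ => Finset.sum_congr rfl fun j _ => by ring
  rw [hv, h]
  congr 1
  exact Finset.sum_congr rfl fun i _ => by ring

theorem dotProduct_mulVec_sub_dotProduct_mulVec (hM : M.IsSymm) (u v : n → ℝ) :
    u ⬝ᵥ (M *ᵥ u) - v ⬝ᵥ (M *ᵥ v) = (u - v) ⬝ᵥ (M *ᵥ (u + v)) := by
  rw [mulVec_add, dotProduct_add, sub_dotProduct, sub_dotProduct, dotProduct_mulVec_comm hM v u]
  ring

end Quadratic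

section Asymptotics

theorem exists_pos_mul_norm_sq_le {E : Type*} [NormedAddCommGroup E] [NormedSpace ℝ E]
    [ProperSpace E] {f : E → ℝ} (hf : Continuous f) (hsmul : ∀ (a : ℝ) x, f (a • x) = a ^ 2 * f x)
    (hpos : ∀ x, x ≠ 0 → 0 < f x) : ∃ c > 0, ∀ x, c * ‖x‖ ^ 2 ≤ f x := by
  have hf0 : f 0 = 0 := by simpa using hsmul 0 0
  rcases subsingleton_or_nontrivial E with hE | hE
  · exact ⟨1, one_pos, fun x => by simp [Subsingleton.elim x 0, hf0]⟩
  obtain ⟨x₀, hx₀, hmin⟩ := (isCompact_sphere (0 : E) 1).exists_isMinOn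
    (NormedSpace.sphere_nonempty.2 zero_le_one) hf.continuousOn
  refine ⟨f x₀, hpos x₀ (ne_zero_of_mem_unit_sphere ⟨x₀, hx₀⟩), fun x => ?_⟩
  rcases eq_or_ne x 0 with rfl | hx
  · simp [hf0]
  have hx' : ‖x‖ ≠ 0 := norm_ne_zero_iff.2 hx
  have hunit : ‖x‖⁻¹ • x ∈ Metric.sphere (0 : E) 1 := by simp [norm_smul, hx']
  calc f x₀ * ‖x‖ ^ 2 ≤ f (‖x‖⁻¹ • x) * ‖x‖ ^ 2 := by gcongr; exact isMinOn_iff.1 hmin _ hunit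
    _ = f x := by rw [hsmul, inv_pow]; field_simp

theorem tendsto_div_nhdsNE_zero_of_abs_sub_le {E : Type*} [NormedAddCommGroup E] {f g : E → ℝ}
    {c C : ℝ} (hc : 0 < c) (hg : ∀ x, c * ‖x‖ ^ 2 ≤ g x)
    (hfg : ∀ x, |f x - g x| ≤ C * ‖x‖ ^ 4) :
    Tendsto (fun x => f x / g x) (𝓝[≠] 0) (𝓝 1) := by
  have hbound : ∀ x, x ≠ 0 → |f x / g x - 1| ≤ C / c * ‖x‖ ^ 2 := by
    intro x hx
    have hx' : 0 < ‖x‖ := norm_pos_iff.2 hx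
    have hgx : 0 < g x := (by positivity : 0 < c * ‖x‖ ^ 2).trans_le (hg x)
    have hC : 0 ≤ C := nonneg_of_mul_nonneg_left ((abs_nonneg _).trans (hfg x)) (by positivity)
    rw [div_sub_one hgx.ne', abs_div, abs_of_pos hgx, div_le_iff₀ hgx]
    calc |f x - g x| ≤ C * ‖x‖ ^ 4 := hfg x
      _ = C / c * ‖x‖ ^ 2 * (c * ‖x‖ ^ 2) := by field_simp
      _ ≤ C / c * ‖x‖ ^ 2 * g x := by gcongr; exact hg x
  rw [tendsto_iff_norm_sub_tendsto_zero]
  refine squeeze_zero' (Eventually.of_forall fun _ => norm_nonneg _)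
    (eventually_nhdsWithin_of_forall hbound) ?_
  have h : Tendsto (fun x : E => C / c * ‖x‖ ^ 2) (𝓝 0) (𝓝 (C / c * ‖(0 : E)‖ ^ 2)) :=
    (by fun_prop : Continuous fun x : E => C / c * ‖x‖ ^ 2).tendsto 0
  simpa using h.mono_left nhdsWithin_le_nhds

end Asymptotics

section LinearAlgebra

theorem _root_.Matrix.PosDef.isSymm_s8 {n : Type*} {M : Matrix n n ℝ} (hM : M.PosDef) : M.IsSymm := by
  simpa [IsHermitian, IsSymm, conjTranspose_eq_transpose_of_trivial] using hM.isHermitian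

variable {n : Type*} [Fintype n]

theorem _root_.Matrix.PosDef.mul_self [DecidableEq n] {Q : Matrix n n ℝ} (hQ : Q.PosDef) :
    (Q * Q).PosDef := by
  simpa [conjTranspose_eq_transpose_of_trivial, hQ.isSymm_s8.eq] using
    PosDef.conjTranspose_mul_self Q (mulVec_injective_iff_isUnit.2 hQ.isUnit)

theorem posDef_of_isSymm {Q : Matrix n n ℝ} (hQ : Q.IsSymm)
    (hpos : ∀ x : n → ℝ, x ≠ 0 → 0 < x ⬝ᵥ (Q *ᵥ x)) : Q.PosDef :=
  .of_dotProduct_mulVec_pos (by rwa [IsHermitian, conjTranspose_eq_transpose_of_trivial])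
    (by simpa using hpos)

theorem isRoot_charpoly_zero_iff [DecidableEq n] {R : Type*} [CommRing R] (M : Matrix n n R) :
    M.charpoly.IsRoot 0 ↔ M.det = 0 := by
  rw [det_eq_sign_charpoly_coeff, (isUnit_neg_one.pow _).mul_right_eq_zero, Polynomial.IsRoot.def,
    Polynomial.coeff_zero_eq_eval_zero]

theorem dotProduct_mul_self_mulVec {Q : Matrix n n ℝ} (hQ : Q.IsSymm) (x : n → ℝ) :
    x ⬝ᵥ ((Q * Q) *ᵥ x) = (Q *ᵥ x) ⬝ᵥ (Q *ᵥ x) := by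
  rw [← mulVec_mulVec, dotProduct_mulVec, ← mulVec_transpose, hQ.eq]

theorem dotProduct_mulVec_self_of_transpose_mul_self [DecidableEq n] {U : Matrix n n ℝ}
    (hU : Uᵀ * U = 1) (y : n → ℝ) : (U *ᵥ y) ⬝ᵥ (U *ᵥ y) = y ⬝ᵥ y := by
  rw [dotProduct_mulVec, ← mulVec_transpose, mulVec_mulVec, hU, one_mulVec, dotProduct_comm]

theorem dotProduct_mulVec_smul_conj [DecidableEq n] {Q U : Matrix n n ℝ} (hQ : Q.IsSymm)
    (hQdet : IsUnit Q.det) (hU : Uᵀ * U = 1) (r : ℝ) (ξ : n → ℝ) :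
    ((r • (Q⁻¹ * U * Q)) *ᵥ ξ) ⬝ᵥ ((Q * Q) *ᵥ ((r • (Q⁻¹ * U * Q)) *ᵥ ξ))
      = r ^ 2 * (ξ ⬝ᵥ ((Q * Q) *ᵥ ξ)) := by
  have hQB : Q *ᵥ ((r • (Q⁻¹ * U * Q)) *ᵥ ξ) = r • (U *ᵥ (Q *ᵥ ξ)) := by
    rw [smul_mulVec, mulVec_smul, mulVec_mulVec, ← mul_assoc, ← mul_assoc,
      mul_nonsing_inv _ hQdet, one_mul, ← mulVec_mulVec]
  rw [dotProduct_mul_self_mulVec hQ, dotProduct_mul_self_mulVec hQ, hQB, smul_dotProduct,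
    dotProduct_smul, dotProduct_mulVec_self_of_transpose_mul_self hU, smul_eq_mul, smul_eq_mul]
  ring

theorem det_ne_zero_of_forall_isRoot_one_lt_norm [DecidableEq n] {A : Matrix n n ℝ}
    (h : ∀ z : ℂ, (A.map Complex.ofReal).charpoly.IsRoot z → 1 < ‖z‖) : A.det ≠ 0 := fun hA => by
  have h0 := h 0 <| (isRoot_charpoly_zero_iff _).2 <|
    ((RingHom.map_det Complex.ofRealHom A).symm.trans (congrArg _ hA)).trans (map_zero _)
  norm_num at h0

theorem mulVec_nonsing_inv_mulVec [DecidableEq n] {N : Matrix n n ℝ} (hdet : N.det ≠ 0)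
    (ξ : n → ℝ) : N *ᵥ (N⁻¹ *ᵥ ξ) = ξ := by
  rw [mulVec_mulVec, mul_nonsing_inv _ (isUnit_iff_ne_zero.2 hdet), one_mulVec]

end LinearAlgebra

section Lattice

abbrev intPoints (d : ℕ) : Submodule ℤ (Fin d → ℝ) := span ℤ (Set.range (Pi.basisFun ℝ (Fin d)))

theorem mem_intPoints {v : Fin d → ℝ} :
    v ∈ intPoints d ↔ ∃ k : Fin d → ℤ, v = fun i => (k i : ℝ) := by
  simp only [Basis.mem_span_iff_repr_mem, Pi.basisFun_repr, algebraMap_int_eq, Int.coe_castRingHom,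
    Set.mem_range, funext_iff, eq_comm (a := v _)]
  exact Classical.skolem

theorem intCast_mem_intPoints (k : Fin d → ℤ) : (fun i => (k i : ℝ)) ∈ intPoints d :=
  mem_intPoints.2 ⟨k, rfl⟩

theorem mulVec_mem_intPoints {M : Matrix (Fin d) (Fin d) ℝ} (hM : ∀ i j, ∃ z : ℤ, M i j = z)
    {v : Fin d → ℝ} (hv : v ∈ intPoints d) : M *ᵥ v ∈ intPoints d := by
  choose N hN using hM
  obtain ⟨k, rfl⟩ := mem_intPoints.1 hv
  refine mem_intPoints.2 ⟨N *ᵥ k, funext fun i => ?_⟩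
  simp [mulVec, dotProduct, hN]

def periodLattice (d : ℕ) : Set (Fin d → ℝ) :=
  {ξ | ∃ k : Fin d → ℤ, ξ = fun i => 2 * π * (k i : ℝ)}

theorem mem_periodLattice_iff {ξ : Fin d → ℝ} :
    ξ ∈ periodLattice d ↔ (2 * π)⁻¹ • ξ ∈ intPoints d := by
  simp only [mem_intPoints, inv_smul_eq_iff₀ two_pi_pos.ne']
  rfl

theorem smul_mem_periodLattice_iff {v : Fin d → ℝ} :
    (2 * π) • v ∈ periodLattice d ↔ v ∈ intPoints d := by
  rw [mem_periodLattice_iff, inv_smul_smul₀ two_pi_pos.ne']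

theorem add_smul_mem_periodLattice_iff {ξ v : Fin d → ℝ} (hv : v ∈ intPoints d) :
    ξ + (2 * π) • v ∈ periodLattice d ↔ ξ ∈ periodLattice d := by
  rw [mem_periodLattice_iff, mem_periodLattice_iff, smul_add, inv_smul_smul₀ two_pi_pos.ne']
  exact add_mem_cancel_right hv

theorem mulVec_mem_periodLattice {M : Matrix (Fin d) (Fin d) ℝ} (hM : ∀ i j, ∃ z : ℤ, M i j = z)
    {ξ : Fin d → ℝ} (hξ : ξ ∈ periodLattice d) : M *ᵥ ξ ∈ periodLattice d := by
  rw [mem_periodLattice_iff, ← mulVec_smul] at *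
  exact mulVec_mem_intPoints hM hξ

theorem zero_mem_periodLattice : (0 : Fin d → ℝ) ∈ periodLattice d :=
  ⟨0, funext fun _ => by simp⟩

theorem mem_periodLattice_iff_sin {ξ : Fin d → ℝ} :
    ξ ∈ periodLattice d ↔ ∀ i, sin (ξ i / 2) = 0 := by
  simp only [sin_eq_zero_iff, periodLattice, Set.mem_ofPred_eq, funext_iff, Classical.skolem]
  refine exists_congr fun k => forall_congr' fun i => ?_
  constructor <;> intro h <;> linarith

end Lattice

section TrigSymbol

variable (M : Matrix (Fin d) (Fin d) ℝ)

noncomputable def trigSymbol (ξ : Fin d → ℝ) : ℝ :=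
  4 * (∑ i, M i i * sin (ξ i / 2) ^ 2)
    + 2 * (∑ i, ∑ j, if i < j then M i j * sin (ξ i) * sin (ξ j) else 0)

attribute [local fun_prop] Continuous.if_const in
theorem continuous_trigSymbol : Continuous (trigSymbol M) := by
  unfold trigSymbol
  fun_prop

variable {M}

theorem trigSymbol_eq (hM : M.IsSymm) (ξ : Fin d → ℝ) :
    trigSymbol M ξ = (sin ∘ ξ) ⬝ᵥ (M *ᵥ (sin ∘ ξ)) + 4 * ∑ i, M i i * sin (ξ i / 2) ^ 4 := by
  have h : ∀ i, 4 * (M i i * sin (ξ i / 2) ^ 2)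
      = M i i * sin (ξ i) ^ 2 + 4 * (M i i * sin (ξ i / 2) ^ 4) := fun i => by
    linear_combination M i i * four_mul_sin_half_sq (ξ i)
  rw [trigSymbol, dotProduct_mulVec_self_eq hM, Finset.mul_sum, Finset.sum_congr rfl fun i _ => h i,
    Finset.sum_add_distrib, ← Finset.mul_sum]
  simp only [Function.comp_apply]
  ring

theorem trigSymbol_add_smul (ξ : Fin d → ℝ) {v : Fin d → ℝ} (hv : v ∈ intPoints d) :
    trigSymbol M (ξ + (2 * π) • v) = trigSymbol M ξ := by
  obtain ⟨k, rfl⟩ := mem_intPoints.1 hv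
  have hhalf : ∀ i, (ξ + (2 * π) • fun i => (k i : ℝ)) i / 2 = ξ i / 2 + k i * π := fun i => by
    simp only [Pi.add_apply, Pi.smul_apply, smul_eq_mul]; ring
  have hfull : ∀ i, (ξ + (2 * π) • fun i => (k i : ℝ)) i = ξ i + k i * (2 * π) := fun i => by
    simp only [Pi.add_apply, Pi.smul_apply, smul_eq_mul]; ring
  simp only [trigSymbol, hhalf, sin_sq_add_int_mul_pi]
  simp only [hfull, sin_add_int_mul_two_pi]

theorem trigSymbol_pos_iff (hM : M.PosDef) {ξ : Fin d → ℝ} :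
    0 < trigSymbol M ξ ↔ ξ ∉ periodLattice d := by
  rw [mem_periodLattice_iff_sin]
  refine ⟨fun hpos hξ => ?_, fun hξ => ?_⟩
  · have hs : ∀ i, sin (ξ i) = 0 := fun i => by
      rw [← mul_div_cancel₀ (ξ i) two_ne_zero, sin_two_mul, hξ, mul_zero, zero_mul]
    simp [trigSymbol, hξ, hs] at hpos
  · obtain ⟨i, hi⟩ := not_forall.1 hξ
    have hquad : 0 ≤ (sin ∘ ξ) ⬝ᵥ (M *ᵥ (sin ∘ ξ)) := by
      simpa using hM.posSemidef.dotProduct_mulVec_nonneg (sin ∘ ξ)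
    have hsum : 0 < ∑ j, M j j * sin (ξ j / 2) ^ 4 :=
      Finset.sum_pos' (fun j _ => mul_nonneg hM.diag_pos.le (by positivity))
        ⟨i, Finset.mem_univ i, mul_pos hM.diag_pos (Even.pow_pos (by decide) hi)⟩
    rw [trigSymbol_eq hM.isSymm_s8]
    linarith

theorem exists_abs_trigSymbol_sub_le (hM : M.IsSymm) :
    ∃ C, ∀ ξ, |trigSymbol M ξ - ξ ⬝ᵥ (M *ᵥ ξ)| ≤ C * ‖ξ‖ ^ 4 := by
  refine ⟨(∑ i, ∑ j, |M i j|) / 3 + (∑ i, |M i i|) / 4, fun ξ => ?_⟩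
  have hcoord : ∀ i, |ξ i| ≤ ‖ξ‖ := fun i => by simpa using norm_le_pi_norm ξ i
  have hsub : ‖sin ∘ ξ - ξ‖ ≤ ‖ξ‖ ^ 3 / 6 :=
    (pi_norm_le_iff_of_nonneg (by positivity)).2 fun i => by
      simpa using (abs_sin_sub_self_le (ξ i)).trans (by gcongr; exact hcoord i)
  have hadd : ‖sin ∘ ξ + ξ‖ ≤ 2 * ‖ξ‖ := (pi_norm_le_iff_of_nonneg (by positivity)).2 fun i => by
    simpa using (abs_add_le _ _).trans (by linarith [abs_sin_le_abs (x := ξ i), hcoord i])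
  have hquartic : |∑ i, M i i * sin (ξ i / 2) ^ 4| ≤ (∑ i, |M i i|) * (‖ξ‖ / 2) ^ 4 := by
    rw [Finset.sum_mul]
    refine (Finset.abs_sum_le_sum_abs _ _).trans (Finset.sum_le_sum fun i _ => ?_)
    rw [abs_mul, abs_pow]
    gcongr
    exact abs_sin_le_abs.trans (by rw [abs_div, abs_two]; linarith [hcoord i])
  rw [trigSymbol_eq hM, add_sub_right_comm, dotProduct_mulVec_sub_dotProduct_mulVec hM]
  calc _ ≤ |(sin ∘ ξ - ξ) ⬝ᵥ (M *ᵥ (sin ∘ ξ + ξ))| + 4 * |∑ i, M i i * sin (ξ i / 2) ^ 4| := by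
        refine (abs_add_le _ _).trans_eq ?_
        rw [abs_mul, abs_of_pos (four_pos : (0 : ℝ) < 4)]
    _ ≤ (∑ i, ∑ j, |M i j|) * (‖ξ‖ ^ 3 / 6 * (2 * ‖ξ‖)) + 4 * ((∑ i, |M i i|) * (‖ξ‖ / 2) ^ 4) := by
        gcongr
        exact (abs_dotProduct_mulVec_le M _ _).trans (by gcongr)
    _ = _ := by ring

theorem tendsto_trigSymbol_div (hM : M.PosDef) :
    Tendsto (fun ξ => trigSymbol M ξ / (ξ ⬝ᵥ (M *ᵥ ξ))) (𝓝[≠] 0) (𝓝 1) := by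
  have hsmul : ∀ (a : ℝ) (x : Fin d → ℝ), (a • x) ⬝ᵥ (M *ᵥ (a • x)) = a ^ 2 * (x ⬝ᵥ (M *ᵥ x)) := by
    intro a x
    simp only [mulVec_smul, smul_dotProduct, dotProduct_smul, smul_eq_mul]
    ring
  obtain ⟨c, hc, hcoer⟩ := exists_pos_mul_norm_sq_le (f := fun x => x ⬝ᵥ (M *ᵥ x))
    (by fun_prop) hsmul fun x hx => by simpa using hM.dotProduct_mulVec_pos hx
  obtain ⟨C, hC⟩ := exists_abs_trigSymbol_sub_le hM.isSymm_s8
  exact tendsto_div_nhdsNE_zero_of_abs_sub_le hc hcoer hC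

end TrigSymbol

section CosetReps

variable {M : Matrix (Fin d) (Fin d) ℝ}

/-- The paper's `S(M)`: the representatives in `[0,1)^d` of `M⁻¹ℤ^d / ℤ^d`. -/
def cosetReps (M : Matrix (Fin d) (Fin d) ℝ) : Set (Fin d → ℝ) :=
  {s | (∀ i, s i ∈ Set.Ico (0 : ℝ) 1) ∧ ∃ k : Fin d → ℤ, M *ᵥ s = fun i => (k i : ℝ)}

theorem mem_cosetReps {s : Fin d → ℝ} :
    s ∈ cosetReps M ↔
      s ∈ ZSpan.fundamentalDomain (Pi.basisFun ℝ (Fin d)) ∧ M *ᵥ s ∈ intPoints d := by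
  rw [ZSpan.fundamentalDomain_pi_basisFun, mem_intPoints]
  simp [cosetReps]

theorem zero_mem_cosetReps : (0 : Fin d → ℝ) ∈ cosetReps M :=
  mem_cosetReps.2 ⟨by simp [ZSpan.fundamentalDomain_pi_basisFun], by simp⟩

theorem eq_zero_of_mem_cosetReps {s : Fin d → ℝ} (hs : s ∈ cosetReps M) (hs' : s ∈ intPoints d) :
    s = 0 := by
  have hfract : ∀ x ∈ ZSpan.fundamentalDomain (Pi.basisFun ℝ (Fin d)),
      ZSpan.fract (Pi.basisFun ℝ (Fin d)) x = x := fun x => ZSpan.fract_eq_self.2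
  rw [← hfract s (mem_cosetReps.1 hs).1,
    ← hfract 0 (mem_cosetReps.1 (zero_mem_cosetReps (M := M))).1, ZSpan.fract_eq_fract, add_zero]
  exact neg_mem hs'

theorem finite_cosetReps (hdet : M.det ≠ 0) : (cosetReps M).Finite := by
  have hinj : Function.Injective (M *ᵥ ·) :=
    mulVec_injective_iff_isUnit.2 ((isUnit_iff_isUnit_det M).2 (isUnit_iff_ne_zero.2 hdet))
  have hbdd : Bornology.IsBounded ((M *ᵥ ·) '' Set.Icc 0 1) :=
    (isCompact_Icc.image (by fun_prop)).isBounded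
  refine ((ZSpan.setFinite_inter (Pi.basisFun ℝ (Fin d)) hbdd).preimage hinj.injOn).subset
    fun s hs => ⟨⟨s, ⟨fun i => (hs.1 i).1, fun i => (hs.1 i).2.le⟩, rfl⟩, (mem_cosetReps.1 hs).2⟩

theorem fract_add_mem_cosetReps (hM : ∀ i j, ∃ z : ℤ, M i j = z) {s t : Fin d → ℝ}
    (hs : s ∈ cosetReps M) (ht : M *ᵥ t ∈ intPoints d) :
    ZSpan.fract (Pi.basisFun ℝ (Fin d)) (s + t) ∈ cosetReps M := by
  refine mem_cosetReps.2 ⟨ZSpan.fract_mem_fundamentalDomain _ _, ?_⟩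
  rw [ZSpan.fract_apply, mulVec_sub, mulVec_add]
  exact sub_mem (add_mem (mem_cosetReps.1 hs).2 ht) (mulVec_mem_intPoints hM (ZSpan.floor _ _).2)

/-- Translation by `t ∈ M⁻¹ℤ^d` permutes `M⁻¹ℤ^d / ℤ^d`. -/
theorem finprod_mem_cosetReps_add (hM : ∀ i j, ∃ z : ℤ, M i j = z) {F : (Fin d → ℝ) → ℝ}
    (hF : ∀ x, ∀ v ∈ intPoints d, F (x + v) = F x) {t : Fin d → ℝ} (ht : M *ᵥ t ∈ intPoints d) :
    ∏ᶠ s ∈ cosetReps M, F (s + t) = ∏ᶠ s ∈ cosetReps M, F s := by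
  set b := Pi.basisFun ℝ (Fin d)
  have hfract : ∀ s ∈ cosetReps M, ZSpan.fract b s = s :=
    fun s hs => ZSpan.fract_eq_self.2 (mem_cosetReps.1 hs).1
  refine finprod_mem_eq_of_bijOn (fun s => ZSpan.fract b (s + t))
    ⟨fun s hs => fract_add_mem_cosetReps hM hs ht, ?inj, ?surj⟩ ?val
  case inj =>
    intro s hs s' hs' h
    have h' := (ZSpan.fract_eq_fract b _ _).1 h
    rw [show -(s + t) + (s' + t) = -s + s' by abel] at h'
    rw [← hfract s hs, ← hfract s' hs']
    exact (ZSpan.fract_eq_fract b s s').2 h'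
  case surj =>
    intro s hs
    refine ⟨ZSpan.fract b (s + -t),
      fract_add_mem_cosetReps hM hs (by rwa [mulVec_neg, neg_mem_iff]), ?_⟩
    show ZSpan.fract b (ZSpan.fract b (s + -t) + t) = s
    conv_rhs => rw [← hfract s hs]
    rw [ZSpan.fract_eq_fract, ZSpan.fract_apply]
    convert (ZSpan.floor b (s + -t)).2 using 1
    abel
  case val =>
    intro s _
    have h := hF (ZSpan.fract b (s + t)) _ (ZSpan.floor b (s + t)).2
    rwa [ZSpan.fract_apply, sub_add_cancel] at h

end CosetReps

section Mask

variable {F : (Fin d → ℝ) → ℝ} {M : Matrix (Fin d) (Fin d) ℝ}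

/-- The paper's `m₀`, for `F = G` and `S = S(Aᵀ)`. -/
noncomputable def mask (F : (Fin d → ℝ) → ℝ) (S : Set (Fin d → ℝ)) (ξ : Fin d → ℝ) : ℝ :=
  (∏ᶠ s ∈ S \ {0}, F (ξ + (2 * π) • s)) / ∏ᶠ s ∈ S \ {0}, F ((2 * π) • s)

theorem continuous_mask (hF : Continuous F) {S : Set (Fin d → ℝ)} (hS : S.Finite) :
    Continuous (mask F S) := by
  unfold mask
  simp only [finprod_mem_eq_finite_toFinset_prod _ hS.sdiff]
  fun_prop

theorem mask_mul_apply {S : Set (Fin d → ℝ)} (hS : S.Finite) (h0 : 0 ∈ S) (ξ : Fin d → ℝ) :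
    mask F S ξ * F ξ = (∏ᶠ s ∈ S, F (ξ + (2 * π) • s)) / ∏ᶠ s ∈ S \ {0}, F ((2 * π) • s) := by
  have h := finprod_mem_insert (fun s => F (ξ + (2 * π) • s))
    (fun h : (0 : Fin d → ℝ) ∈ S \ {0} => h.2 rfl) hS.sdiff
  rw [Set.insert_sdiff_singleton, Set.insert_eq_of_mem h0, smul_zero, add_zero] at h
  rw [mask, h, div_mul_eq_mul_div, mul_comm]

theorem mask_mul_add_smul (hM : ∀ i j, ∃ z : ℤ, M i j = z) (hdet : M.det ≠ 0)
    (hF : ∀ ξ, ∀ v ∈ intPoints d, F (ξ + (2 * π) • v) = F ξ) {t : Fin d → ℝ}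
    (ht : M *ᵥ t ∈ intPoints d) (ξ : Fin d → ℝ) :
    mask F (cosetReps M) (ξ + (2 * π) • t) * F (ξ + (2 * π) • t)
      = mask F (cosetReps M) ξ * F ξ := by
  simp only [mask_mul_apply (finite_cosetReps hdet) zero_mem_cosetReps]
  congr 1
  have h := finprod_mem_cosetReps_add hM (F := fun s => F (ξ + (2 * π) • s))
    (fun x v hv => by simp only [smul_add, ← add_assoc, hF _ v hv]) ht
  refine Eq.trans (finprod_mem_congr rfl fun s _ => ?_) h
  rw [smul_add, add_comm ((2 * π) • s), add_assoc]

theorem finprod_mem_cosetReps_smul_pos (hF : ∀ ξ ∉ periodLattice d, 0 < F ξ) :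
    0 < ∏ᶠ s ∈ cosetReps M \ {0}, F ((2 * π) • s) :=
  finprod_mem_induction (0 < ·) one_pos (fun _ _ => mul_pos) fun _ hs => hF _ fun hmem =>
    hs.2 (eq_zero_of_mem_cosetReps hs.1 (smul_mem_periodLattice_iff.1 hmem))

theorem mask_pos (hM : ∀ i j, ∃ z : ℤ, M i j = z) (hF : ∀ ξ ∉ periodLattice d, 0 < F ξ)
    {η : Fin d → ℝ} (hη : M *ᵥ η ∉ periodLattice d) : 0 < mask F (cosetReps M) η := by
  refine div_pos (finprod_mem_induction (0 < ·) one_pos (fun _ _ => mul_pos)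
    fun s hs => hF _ fun hmem => hη ?_) (finprod_mem_cosetReps_smul_pos hF)
  rw [← add_smul_mem_periodLattice_iff (mem_cosetReps.1 hs.1).2, ← mulVec_smul, ← mulVec_add]
  exact mulVec_mem_periodLattice hM hmem

theorem mask_zero (hF : ∀ ξ ∉ periodLattice d, 0 < F ξ) : mask F (cosetReps M) 0 = 1 := by
  rw [mask]
  simp only [zero_add]
  exact div_self (finprod_mem_cosetReps_smul_pos hF).ne'

end Mask

section Periodic

variable {f : (Fin d → ℝ) → ℝ}

theorem continuous_of_continuousAt_zero_of_periodic
    (hper : ∀ ξ, ∀ v ∈ intPoints d, f (ξ + (2 * π) • v) = f ξ) (h0 : ContinuousAt f 0)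
    (hoff : ∀ ξ ∉ periodLattice d, ContinuousAt f ξ) : Continuous f := by
  refine continuous_iff_continuousAt.2 fun ξ => ?_
  by_cases hξ : ξ ∈ periodLattice d
  · rw [mem_periodLattice_iff] at hξ
    have hshift : ξ + (2 * π) • -((2 * π)⁻¹ • ξ) = 0 := by
      rw [smul_neg, smul_inv_smul₀ two_pi_pos.ne', add_neg_cancel]
    exact (h0.comp_of_eq (continuous_add_const _).continuousAt hshift).congr
      (Eventually.of_forall fun x => hper x _ (neg_mem hξ))
  · exact hoff ξ hξ

theorem exists_forall_le_le_of_periodic (hf : Continuous f)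
    (hper : ∀ ξ, ∀ v ∈ intPoints d, f (ξ + (2 * π) • v) = f ξ) :
    ∃ a b, ∀ ξ, f a ≤ f ξ ∧ f ξ ≤ f b := by
  have hsurj : Function.Surjective fun x : Fin d → ℝ => (2 * π) • x :=
    fun y => ⟨(2 * π)⁻¹ • y, smul_inv_smul₀ two_pi_pos.ne' y⟩
  have hK : IsCompact (Set.range f) := by
    rw [← hsurj.range_comp f]
    exact IsZLattice.isCompact_range_of_periodic (intPoints d) _ (by fun_prop)
      fun z w hw => by simp only [Function.comp_apply, smul_add, hper _ w hw]
  obtain ⟨_, ⟨a, rfl⟩, ha⟩ := hK.exists_isLeast (Set.range_nonempty f)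
  obtain ⟨_, ⟨b, rfl⟩, hb⟩ := hK.exists_isGreatest (Set.range_nonempty f)
  exact ⟨a, b, fun ξ => ⟨ha ⟨ξ, rfl⟩, hb ⟨ξ, rfl⟩⟩⟩

end Periodic

section SymbolRatio

variable {c : ℝ} {M N : Matrix (Fin d) (Fin d) ℝ}

open scoped Classical in
/-- The paper's `μ` with `c = q^{2/d}`, `G = trigSymbol M`, `m₀ = mask G S(N)` and `A⁻ᵀ = N⁻¹`. -/
noncomputable def symbolRatio (c : ℝ) (M N : Matrix (Fin d) (Fin d) ℝ) (ξ : Fin d → ℝ) : ℝ :=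
  if ξ ∈ periodLattice d then 1 else
    c * mask (trigSymbol M) (cosetReps N) (N⁻¹ *ᵥ ξ) * trigSymbol M (N⁻¹ *ᵥ ξ) / trigSymbol M ξ

theorem symbolRatio_of_mem {ξ : Fin d → ℝ} (hξ : ξ ∈ periodLattice d) :
    symbolRatio c M N ξ = 1 :=
  if_pos hξ

theorem symbolRatio_add_smul (hN : ∀ i j, ∃ z : ℤ, N i j = z) (hdet : N.det ≠ 0)
    (ξ : Fin d → ℝ) {v : Fin d → ℝ} (hv : v ∈ intPoints d) :
    symbolRatio c M N (ξ + (2 * π) • v) = symbolRatio c M N ξ := by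
  have hNv : N *ᵥ (N⁻¹ *ᵥ v) ∈ intPoints d := by rwa [mulVec_nonsing_inv_mulVec hdet]
  simp only [symbolRatio]
  rw [add_smul_mem_periodLattice_iff hv]
  split_ifs
  · rfl
  · rw [mulVec_add, mulVec_smul, mul_assoc, mul_assoc,
      mask_mul_add_smul hN hdet (fun ξ v hv => trigSymbol_add_smul ξ hv) hNv,
      trigSymbol_add_smul ξ hv]

theorem symbolRatio_pos (hM : M.PosDef) (hN : ∀ i j, ∃ z : ℤ, N i j = z) (hdet : N.det ≠ 0)
    (hc : 0 < c) (ξ : Fin d → ℝ) : 0 < symbolRatio c M N ξ := by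
  have hG : ∀ ξ ∉ periodLattice d, 0 < trigSymbol M ξ := fun ξ => (trigSymbol_pos_iff hM).2
  unfold symbolRatio
  split_ifs with hξ
  · exact one_pos
  have hBξ : N⁻¹ *ᵥ ξ ∉ periodLattice d := fun h => hξ <| by
    simpa [mulVec_nonsing_inv_mulVec hdet] using mulVec_mem_periodLattice hN h
  have hm := mask_pos hN hG (η := N⁻¹ *ᵥ ξ) (by rwa [mulVec_nonsing_inv_mulVec hdet])
  exact div_pos (mul_pos (mul_pos hc hm) (hG _ hBξ)) (hG _ hξ)

theorem continuousAt_symbolRatio_of_not_mem (hM : M.PosDef) (hdet : N.det ≠ 0) {ξ : Fin d → ℝ}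
    (hξ : ξ ∉ periodLattice d) : ContinuousAt (symbolRatio c M N) ξ := by
  have hG := continuous_trigSymbol M
  have hm := continuous_mask hG (finite_cosetReps (M := N) hdet)
  have hGξ := (trigSymbol_pos_iff hM).2 hξ
  have hformula : ContinuousAt (fun x => c * mask (trigSymbol M) (cosetReps N) (N⁻¹ *ᵥ x)
      * trigSymbol M (N⁻¹ *ᵥ x) / trigSymbol M x) ξ :=
    ((continuous_const.mul (hm.comp (by fun_prop))).mul (hG.comp (by fun_prop))).continuousAt.div
      hG.continuousAt hGξ.ne'
  refine hformula.congr (eventually_of_mem ((isOpen_lt continuous_const hG).mem_nhds hGξ)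
    fun x hx => ?_)
  rw [symbolRatio, if_neg ((trigSymbol_pos_iff hM).1 hx)]

theorem tendsto_symbolRatio_nhdsNE_zero (hM : M.PosDef) (hdet : N.det ≠ 0)
    (hscale : ∀ ξ, c * ((N⁻¹ *ᵥ ξ) ⬝ᵥ (M *ᵥ (N⁻¹ *ᵥ ξ))) = ξ ⬝ᵥ (M *ᵥ ξ)) :
    Tendsto (symbolRatio c M N) (𝓝[≠] 0) (𝓝 1) := by
  have hP : ∀ ξ ≠ 0, 0 < ξ ⬝ᵥ (M *ᵥ ξ) := fun ξ hξ => by simpa using hM.dotProduct_mulVec_pos hξ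
  have hB : Tendsto (N⁻¹ *ᵥ ·) (𝓝[≠] 0) (𝓝[≠] 0) := by
    refine tendsto_nhdsWithin_of_tendsto_nhds_of_eventually_within _
      (((by fun_prop : Continuous (N⁻¹ *ᵥ ·)).tendsto' 0 0 (mulVec_zero _)).mono_left
        nhdsWithin_le_nhds) (eventually_nhdsWithin_of_forall fun ξ (hξ : ξ ≠ 0) h => hξ ?_)
    rw [← mulVec_nonsing_inv_mulVec hdet ξ, show N⁻¹ *ᵥ ξ = 0 from h, mulVec_zero]
  have hGP := tendsto_trigSymbol_div hM
  have hm : Tendsto (fun ξ => mask (trigSymbol M) (cosetReps N) (N⁻¹ *ᵥ ξ)) (𝓝[≠] 0) (𝓝 1) := by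
    have h := ((continuous_mask (continuous_trigSymbol M) (finite_cosetReps hdet)).comp
      (by fun_prop : Continuous (N⁻¹ *ᵥ ·))).tendsto 0
    rw [Function.comp_apply, mulVec_zero, mask_zero fun ξ => (trigSymbol_pos_iff hM).2] at h
    exact h.mono_left nhdsWithin_le_nhds
  have hlim := (hm.mul (hGP.comp hB)).div hGP one_ne_zero
  rw [mul_one, div_one] at hlim
  refine hlim.congr' ?_
  -- `G / P → 1` forces `G ξ > 0`, i.e. `ξ ∉ 2πℤ^d`, near `0`.
  filter_upwards [self_mem_nhdsWithin, hGP.eventually (lt_mem_nhds one_pos),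
    hB self_mem_nhdsWithin] with ξ hξ hGξ hBξ
  have hξL : ξ ∉ periodLattice d := (trigSymbol_pos_iff hM).1 <|
    (div_pos_iff_of_pos_right (hP ξ hξ)).1 hGξ
  have hPB := (hP _ hBξ).ne'
  have hGξ' := ((trigSymbol_pos_iff hM).2 hξL).ne'
  simp only [Pi.div_apply, Function.comp_apply, symbolRatio, if_neg hξL, ← hscale ξ]
  field_simp

theorem continuous_symbolRatio (hM : M.PosDef) (hN : ∀ i j, ∃ z : ℤ, N i j = z)
    (hdet : N.det ≠ 0)
    (hscale : ∀ ξ, c * ((N⁻¹ *ᵥ ξ) ⬝ᵥ (M *ᵥ (N⁻¹ *ᵥ ξ))) = ξ ⬝ᵥ (M *ᵥ ξ)) :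
    Continuous (symbolRatio c M N) := by
  refine continuous_of_continuousAt_zero_of_periodic (fun ξ _ => symbolRatio_add_smul hN hdet ξ) ?_
    fun ξ => continuousAt_symbolRatio_of_not_mem hM hdet
  rw [← continuousWithinAt_compl_self, ContinuousWithinAt,
    symbolRatio_of_mem zero_mem_periodLattice]
  exact tendsto_symbolRatio_nhdsNE_zero hM hdet hscale

end SymbolRatio

end EllipticSymbol

open EllipticSymbol

theorem elliptic_stmt8_general
    (d : ℕ)
    (A U Q : Matrix (Fin d) (Fin d) ℝ)
    (hAint : ∀ i j, ∃ z : ℤ, A i j = (z : ℝ))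
    (hAeig : ∀ z : ℂ, (Matrix.charpoly (A.map Complex.ofReal)).IsRoot z →
      1 < ‖z‖)
    (q : ℝ) (hq : q = |A.det|)
    (hU : Uᵀ * U = 1)
    (hQsym : Qᵀ = Q)
    (hQpos : ∀ x : Fin d → ℝ, x ≠ 0 → 0 < x ⬝ᵥ (Q *ᵥ x))
    (hfact : (Aᵀ)⁻¹ = (q ^ (-(1:ℝ)/(d:ℝ))) • (Q⁻¹ * U * Q))
    (G : (Fin d → ℝ) → ℝ)
    (hG : ∀ ξ, G ξ = 4 * (∑ i, (Q * Q) i i * Real.sin (ξ i / 2) ^ 2)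
      + 2 * (∑ i, ∑ j, if i < j then (Q * Q) i j * Real.sin (ξ i) * Real.sin (ξ j) else 0))
    (SA : Set (Fin d → ℝ))
    (hSA : SA = {s | (∀ i, s i ∈ Set.Ico (0:ℝ) 1) ∧
      ∃ k : Fin d → ℤ, Aᵀ *ᵥ s = fun i => (k i : ℝ)})
    (m0 : (Fin d → ℝ) → ℝ)
    (hm0 : ∀ ξ, m0 ξ = (∏ᶠ s ∈ SA \ {0}, G (ξ + (2 * Real.pi) • s)) /
      (∏ᶠ s ∈ SA \ {0}, G ((2 * Real.pi) • s)))
    (μ : (Fin d → ℝ) → ℝ)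
    (hμ1 : ∀ ξ : Fin d → ℝ, (∃ k : Fin d → ℤ, ξ = fun i => 2 * Real.pi * (k i : ℝ)) →
      μ ξ = 1)
    (hμ2 : ∀ ξ : Fin d → ℝ, ¬ (∃ k : Fin d → ℤ, ξ = fun i => 2 * Real.pi * (k i : ℝ)) →
      μ ξ = q ^ ((2:ℝ)/(d:ℝ)) * m0 ((Aᵀ)⁻¹ *ᵥ ξ) * G ((Aᵀ)⁻¹ *ᵥ ξ) / G ξ)
    :
    (∀ ξ : Fin d → ℝ, ∀ k : Fin d → ℤ, μ (ξ + fun i => 2 * Real.pi * (k i : ℝ)) = μ ξ) ∧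
    (∀ k : Fin d → ℤ, μ (fun i => 2 * Real.pi * (k i : ℝ)) = 1) ∧
    Continuous μ ∧
    (∃ 𝒜 ℬ : ℝ, 0 < 𝒜 ∧ 1 ≤ ℬ ∧ ∀ ξ : Fin d → ℝ, 𝒜 ≤ μ ξ ∧ μ ξ ≤ ℬ) := by
  obtain rfl : G = trigSymbol (Q * Q) := funext hG
  obtain rfl : SA = cosetReps Aᵀ := hSA
  obtain rfl : m0 = mask (trigSymbol (Q * Q)) (cosetReps Aᵀ) := funext hm0
  have hdet : Aᵀ.det ≠ 0 := by
    rw [det_transpose]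
    exact det_ne_zero_of_forall_isRoot_one_lt_norm hAeig
  have hq0 : 0 < q := hq ▸ abs_pos.2 (det_transpose A ▸ hdet)
  have hQ := posDef_of_isSymm hQsym hQpos
  have hscale : ∀ ξ, q ^ ((2:ℝ)/d) * (((Aᵀ)⁻¹ *ᵥ ξ) ⬝ᵥ ((Q * Q) *ᵥ ((Aᵀ)⁻¹ *ᵥ ξ)))
      = ξ ⬝ᵥ ((Q * Q) *ᵥ ξ) := fun ξ => by
    rw [hfact, dotProduct_mulVec_smul_conj hQsym ((isUnit_iff_isUnit_det Q).1 hQ.isUnit) hU,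
      ← mul_assoc, ← Real.rpow_natCast, ← Real.rpow_mul hq0.le, ← Real.rpow_add hq0]
    ring_nf
    simp
  have hAT : ∀ i j, ∃ z : ℤ, Aᵀ i j = z := fun i j => hAint j i
  set c := q ^ ((2:ℝ)/d)
  obtain rfl : μ = symbolRatio c (Q * Q) Aᵀ := funext fun ξ => by
    unfold symbolRatio
    split_ifs with h
    exacts [hμ1 ξ h, hμ2 ξ h]
  have hper : ∀ ξ, ∀ v ∈ intPoints d,
      symbolRatio c (Q * Q) Aᵀ (ξ + (2 * π) • v) = symbolRatio c (Q * Q) Aᵀ ξ :=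
    fun ξ _ => symbolRatio_add_smul hAT hdet ξ
  have hcont := continuous_symbolRatio hQ.mul_self hAT hdet hscale
  obtain ⟨a, b, hab⟩ := exists_forall_le_le_of_periodic hcont hper
  refine ⟨fun ξ k => hper ξ _ (intCast_mem_intPoints k), fun k => symbolRatio_of_mem ⟨k, rfl⟩,
    hcont, _, _, symbolRatio_pos hQ.mul_self hAT hdet (Real.rpow_pos_of_pos hq0 _) a, ?_, hab⟩
  exact (symbolRatio_of_mem zero_mem_periodLattice).symm.trans_le (hab 0).2

/-- In the elliptic setup, `μ` is `2π`-periodic, equals `1` on `2πℤ^d`,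
is continuous on `ℝ^d`, and is bounded: `𝒜 ≤ μ(ξ) ≤ ℬ` with `𝒜 > 0`, `1 ≤ ℬ < ∞`. -/
theorem elliptic_stmt8
    (d : ℕ) (hd : 0 < d)
    (A U Q : Matrix (Fin d) (Fin d) ℝ)
    (hAint : ∀ i j, ∃ z : ℤ, A i j = (z : ℝ))
    (hAeig : ∀ z : ℂ, (Matrix.charpoly (A.map Complex.ofReal)).IsRoot z →
      1 < ‖z‖)
    (hAdiag : ∃ Pm D : Matrix (Fin d) (Fin d) ℂ, IsUnit Pm ∧ D.IsDiag ∧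
      A.map Complex.ofReal = Pm * D * Pm⁻¹)
    (hAiso : ∀ z w : ℂ, (Matrix.charpoly (A.map Complex.ofReal)).IsRoot z →
      (Matrix.charpoly (A.map Complex.ofReal)).IsRoot w → ‖z‖ = ‖w‖)
    (q : ℝ) (hq : q = |A.det|)
    (hU : Uᵀ * U = 1)
    (hQsym : Qᵀ = Q)
    (hQpos : ∀ x : Fin d → ℝ, x ≠ 0 → 0 < x ⬝ᵥ (Q *ᵥ x))
    (hfact : (Aᵀ)⁻¹ = (q ^ (-(1:ℝ)/(d:ℝ))) • (Q⁻¹ * U * Q))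
    (P : (Fin d → ℝ) → ℝ)
    (hP : ∀ ξ, P ξ = ξ ⬝ᵥ ((Q * Q) *ᵥ ξ))
    (G : (Fin d → ℝ) → ℝ)
    (hG : ∀ ξ, G ξ = 4 * (∑ i, (Q * Q) i i * Real.sin (ξ i / 2) ^ 2)
      + 2 * (∑ i, ∑ j, if i < j then (Q * Q) i j * Real.sin (ξ i) * Real.sin (ξ j) else 0))
    (SA : Set (Fin d → ℝ))
    (hSA : SA = {s | (∀ i, s i ∈ Set.Ico (0:ℝ) 1) ∧
      ∃ k : Fin d → ℤ, Aᵀ *ᵥ s = fun i => (k i : ℝ)})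
    (m0 : (Fin d → ℝ) → ℝ)
    (hm0 : ∀ ξ, m0 ξ = (∏ᶠ s ∈ SA \ {0}, G (ξ + (2 * Real.pi) • s)) /
      (∏ᶠ s ∈ SA \ {0}, G ((2 * Real.pi) • s)))
    (μ : (Fin d → ℝ) → ℝ)
    (hμ1 : ∀ ξ : Fin d → ℝ, (∃ k : Fin d → ℤ, ξ = fun i => 2 * Real.pi * (k i : ℝ)) →
      μ ξ = 1)
    (hμ2 : ∀ ξ : Fin d → ℝ, ¬ (∃ k : Fin d → ℤ, ξ = fun i => 2 * Real.pi * (k i : ℝ)) →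
      μ ξ = q ^ ((2:ℝ)/(d:ℝ)) * m0 ((Aᵀ)⁻¹ *ᵥ ξ) * G ((Aᵀ)⁻¹ *ᵥ ξ) / G ξ)
    :
    (∀ ξ : Fin d → ℝ, ∀ k : Fin d → ℤ, μ (ξ + fun i => 2 * Real.pi * (k i : ℝ)) = μ ξ) ∧
    (∀ k : Fin d → ℤ, μ (fun i => 2 * Real.pi * (k i : ℝ)) = 1) ∧
    Continuous μ ∧
    (∃ 𝒜 ℬ : ℝ, 0 < 𝒜 ∧ 1 ≤ ℬ ∧ ∀ ξ : Fin d → ℝ, 𝒜 ≤ μ ξ ∧ μ ξ ≤ ℬ) :=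
  elliptic_stmt8_general d A U Q hAint hAeig q hq hU hQsym hQpos hfact G hG SA hSA m0 hm0 μ hμ1 hμ2
end
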